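/- arXiv:1111.2820 — 13 statements merged into one kernel-verified Lean document; each statement's English description precedes it below -/
import Mathlib

section
/- Let (X, 𝓑, μ) be a nonatomic probability space and f : X → X a measurable map. If P is a strong generator of f, then P is a measure-sensitive partition for f. -/
open MeasureTheory Set Function Filter
open scoped ENNReal

variable {X : Type*}

/-- A countable partition of a measure space: a countable disjoint collection of
nonempty measurable sets whose union is the whole space. -/
def IsCountablePartition [MeasurableSpace X] (P : Set (Set X)) : Prop :=
  P.Countable ∧ (∀ ξ ∈ P, MeasurableSet ξ) ∧ (∀ ξ ∈ P, ξ.Nonempty) ∧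
    P.PairwiseDisjoint id ∧ ⋃₀ P = Set.univ

/-- The set of points `y` having the same `P`-itinerary as `x` under `f`:
for every `n`, `f^n y` lies in the element of `P` containing `f^n x`. -/
def sameItinerary (f : X → X) (P : Set (Set X)) (x : X) : Set X :=
  {y | ∀ n : ℕ, ∃ ξ ∈ P, f^[n] x ∈ ξ ∧ f^[n] y ∈ ξ}

/-- A measure-sensitive partition for `f`: a countable partition such that for every `x`
the set of points with the same itinerary as `x` is `μ`-null. -/
def IsMeasureSensitivePartition [MeasurableSpace X] (μ : Measure X) (f : X → X)
    (P : Set (Set X)) : Prop :=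
  IsCountablePartition P ∧ ∀ x : X, μ (sameItinerary f P x) = 0

/-- A map is measure-expansive if it admits a measure-sensitive partition. -/
def MeasureExpansive [MeasurableSpace X] (μ : Measure X) (f : X → X) : Prop :=
  ∃ P : Set (Set X), IsMeasureSensitivePartition μ f P

/-- An atom of a measure: a measurable set of positive measure all of whose measurable
subsets have measure `0` or full measure of the set. -/
def IsMeasureAtom [MeasurableSpace X] (μ : Measure X) (A : Set X) : Prop :=
  MeasurableSet A ∧ 0 < μ A ∧ ∀ B : Set X, B ⊆ A → MeasurableSet B → μ B = 0 ∨ μ B = μ A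

/-- A measure is nonatomic if it has no atoms. -/
def Nonatomic [MeasurableSpace X] (μ : Measure X) : Prop :=
  ∀ A : Set X, ¬ IsMeasureAtom μ A

/-- A strong generator of `f`: a countable partition `P` such that the smallest σ-algebra
containing `⋃_{k∈ℕ} f^{-k}(P)` equals the full σ-algebra mod `μ`-null sets. -/
def IsStrongGenerator [MeasurableSpace X] (μ : Measure X) (f : X → X)
    (P : Set (Set X)) : Prop :=
  IsCountablePartition P ∧
    ∀ B : Set X, MeasurableSet B →
      ∃ A : Set X,
        MeasurableSet[MeasurableSpace.generateFrom
          {S : Set X | ∃ k : ℕ, ∃ ξ ∈ P, S = f^[k] ⁻¹' ξ}] A ∧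
        μ (symmDiff A B) = 0

/-!
The set `S` of points sharing the `P`-itinerary of `x` is measurable and, for every set `A` of the
σ-algebra generated by the `f⁻ᵏ(P)`, lies either inside `A` or outside it: this holds for the
generators because `P` is a partition, and passes to complements and countable unions. Since
every measurable set agrees mod `μ` with such an `A`, every measurable subset of `S` has measure
`0` or `μ S`. So `S` would be an atom if `μ S > 0`.
-/

open scoped symmDiff

theorem measurableSet_sameItinerary [MeasurableSpace X] {f : X → X} (hf : Measurable f)
    {P : Set (Set X)} (hPc : P.Countable) (hPm : ∀ ξ ∈ P, MeasurableSet ξ) (x : X) :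
    MeasurableSet (sameItinerary f P x) := by
  have hS : sameItinerary f P x =
      ⋂ n, ⋃ ξ ∈ {ξ ∈ P | f^[n] x ∈ ξ}, f^[n] ⁻¹' ξ := by
    ext y
    simp [sameItinerary, and_assoc]
  rw [hS]
  exact .iInter fun n => .biUnion (hPc.mono (sep_subset _ _)) fun ξ hξ =>
    hf.iterate n (hPm ξ hξ.1)

theorem sameItinerary_subset_or_disjoint {f : X → X} {P : Set (Set X)}
    (hP : P.PairwiseDisjoint id) (x : X) {A : Set X}
    (hA : MeasurableSet[MeasurableSpace.generateFrom
      {S : Set X | ∃ k : ℕ, ∃ ξ ∈ P, S = f^[k] ⁻¹' ξ}] A) :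
    sameItinerary f P x ⊆ A ∨ Disjoint (sameItinerary f P x) A := by
  induction A, hA using MeasurableSpace.generateFrom_induction with
  | hC t ht _ =>
    obtain ⟨k, ζ, hζ, rfl⟩ := ht
    by_cases hxζ : f^[k] x ∈ ζ
    · left
      intro y hy
      obtain ⟨ξ, hξ, hxξ, hyξ⟩ := hy k
      rwa [hP.elim hζ hξ (not_disjoint_iff.mpr ⟨_, hxζ, hxξ⟩)]
    · right
      refine disjoint_left.mpr fun y hy hyζ => ?_
      obtain ⟨ξ, hξ, hxξ, hyξ⟩ := hy k
      rw [hP.elim hζ hξ (not_disjoint_iff.mpr ⟨_, hyζ, hyξ⟩)] at hxζ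
      exact hxζ hxξ
  | empty => exact .inr (disjoint_empty _)
  | compl t _ ih =>
    exact ih.symm.imp subset_compl_iff_disjoint_right.mpr disjoint_compl_right_iff_subset.mpr
  | iUnion s _ ih =>
    by_cases h : ∃ n, sameItinerary f P x ⊆ s n
    · obtain ⟨n, hn⟩ := h
      exact .inl (hn.trans (subset_iUnion s n))
    · exact .inr <| disjoint_iUnion_right.mpr fun n => (ih n).resolve_left (not_exists.mp h n)

theorem isMeasureAtom_of_subset_or_disjoint [MeasurableSpace X] {μ : Measure X} {S : Set X}
    {p : Set X → Prop} (hS : MeasurableSet S) (hμS : μ S ≠ 0)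
    (happrox : ∀ B : Set X, MeasurableSet B → ∃ A, p A ∧ μ (A ∆ B) = 0)
    (htrap : ∀ A, p A → S ⊆ A ∨ Disjoint S A) :
    IsMeasureAtom μ S := by
  refine ⟨hS, pos_iff_ne_zero.mpr hμS, fun B hBS hB => ?_⟩
  obtain ⟨A, hA, hAB⟩ := happrox B hB
  rcases htrap A hA with hSA | hSA
  · have hBA : B =ᵐ[μ] A := (measure_symmDiff_eq_zero_iff.mp hAB).symm
    exact .inr (le_antisymm (measure_mono hBS)
      ((measure_mono hSA).trans (measure_congr hBA).ge))
  · have hB_sub : B ⊆ A ∆ B := fun y hy =>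
      .inr ⟨hy, disjoint_left.mp hSA (hBS hy)⟩
    exact .inl (measure_mono_null hB_sub hAB)

theorem strongGenerator_isMeasureSensitivePartition_general
    [MeasurableSpace X] (μ : Measure X) (hna : Nonatomic μ)
    (f : X → X) (hf : Measurable f) (P : Set (Set X)) (hP : IsStrongGenerator μ f P) :
    IsMeasureSensitivePartition μ f P := by
  obtain ⟨hPc, hPm, -, hPd, -⟩ := hP.1
  refine ⟨hP.1, fun x => ?_⟩
  by_contra hμS
  exact hna _ <| isMeasureAtom_of_subset_or_disjoint
    (measurableSet_sameItinerary hf hPc hPm x) hμS hP.2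
    fun A hA => sameItinerary_subset_or_disjoint hPd x hA

/-- Every strong generator of a measurable map on a nonatomic probability space
is a measure-sensitive partition. -/
theorem strongGenerator_isMeasureSensitivePartition
    [MeasurableSpace X] (μ : Measure X) [IsProbabilityMeasure μ] (hna : Nonatomic μ)
    (f : X → X) (hf : Measurable f) (P : Set (Set X)) (hP : IsStrongGenerator μ f P) :
    IsMeasureSensitivePartition μ f P :=
  strongGenerator_isMeasureSensitivePartition_general μ hna f hf P hP
end

section
/- Every nonatomic standard probability space carries a measure-sensitive sequence of partitions. -/
/-!
Embed `X` measurably and injectively into the Cantor space `ℕ → Bool` and let `P n` be the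
partition of `X` according to the first `n` coordinates of the image. Each partition refines
the previous one, and a choice of one cell at every level pins down all coordinates, so the
intersection of the cells is a measurable set with at most one point. In a nonatomic measure
such a set is null.
-/

open MeasureTheory Set Function Filter
open scoped ENNReal

variable {X : Type*}

/-- A measure-sensitive sequence of partitions: an increasing (each member of `P (n+1)` is
contained mod 0 in some member of `P n`) sequence of countable partitions such that every
selection `ξ n ∈ P n` has `μ`-null intersection. -/
def IsMeasureSensitiveSeq [MeasurableSpace X] (μ : Measure X) (P : ℕ → Set (Set X)) : Prop :=
  (∀ n, IsCountablePartition (P n)) ∧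
    (∀ n, ∀ η ∈ P (n + 1), ∃ ξ ∈ P n, μ (η \ ξ) = 0) ∧
    ∀ ξ : ℕ → Set X, (∀ n, ξ n ∈ P n) → μ (⋂ n, ξ n) = 0

def fiberPartition {ι : Type*} (g : X → ι) : Set (Set X) :=
  range fun x => g ⁻¹' {g x}

section FiberPartition

variable {ι κ : Type*} {g : X → ι}

lemma eq_of_mem_fiberPartition {s : Set X} (hs : s ∈ fiberPartition g) {x y : X}
    (hx : x ∈ s) (hy : y ∈ s) : g x = g y := by
  obtain ⟨z, rfl⟩ := hs
  exact hx.trans hy.symm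

lemma isCountablePartition_fiberPartition [MeasurableSpace X] [MeasurableSpace ι] [Countable ι]
    [MeasurableSingletonClass ι] (hg : Measurable g) : IsCountablePartition (fiberPartition g) := by
  refine ⟨?_, ?_, ?_, ?_, ?_⟩
  · exact (countable_range fun i : ι => g ⁻¹' {i}).mono
      (range_comp_subset_range g fun i => g ⁻¹' {i})
  · rintro _ ⟨x, rfl⟩
    exact hg (measurableSet_singleton _)
  · rintro _ ⟨x, rfl⟩
    exact ⟨x, rfl⟩
  · rintro _ ⟨x, rfl⟩ _ ⟨y, rfl⟩ hne
    exact (disjoint_singleton.2 fun h => hne (by simp only [h])).preimage g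
  · exact eq_univ_of_forall fun x => mem_sUnion_of_mem (t := g ⁻¹' {g x}) rfl ⟨x, rfl⟩

lemma exists_superset_mem_fiberPartition {g' : X → κ} (hfac : ∀ x y, g' x = g' y → g x = g y)
    {η : Set X} (hη : η ∈ fiberPartition g') : ∃ ξ ∈ fiberPartition g, η ⊆ ξ := by
  obtain ⟨x, rfl⟩ := hη
  exact ⟨g ⁻¹' {g x}, ⟨x, rfl⟩, fun y hy => (hfac y x hy).symm ▸ rfl⟩

end FiberPartition

lemma Nonatomic.measure_eq_zero_of_subsingleton [MeasurableSpace X] {μ : Measure X}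
    (hna : Nonatomic μ) {s : Set X} (hs : MeasurableSet s) (hsub : s.Subsingleton) :
    μ s = 0 := by
  by_contra h
  refine hna s ⟨hs, pos_iff_ne_zero.2 h, fun B hB _ => ?_⟩
  rcases B.eq_empty_or_nonempty with rfl | ⟨b, hb⟩
  · exact Or.inl measure_empty
  · exact Or.inr (by rw [hsub.eq_singleton_of_mem (hB hb), (hsub.anti hB).eq_singleton_of_mem hb])

theorem isMeasureSensitiveSeq_fiberPartition [MeasurableSpace X] {μ : Measure X}
    (hna : Nonatomic μ) {ι : ℕ → Type*} [∀ n, MeasurableSpace (ι n)] [∀ n, Countable (ι n)]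
    [∀ n, MeasurableSingletonClass (ι n)] {g : ∀ n, X → ι n} (hg : ∀ n, Measurable (g n))
    (hrefine : ∀ n x y, g (n + 1) x = g (n + 1) y → g n x = g n y)
    (hsep : ∀ x y, (∀ n, g n x = g n y) → x = y) :
    IsMeasureSensitiveSeq μ fun n => fiberPartition (g n) := by
  have hpart n := isCountablePartition_fiberPartition (hg n)
  refine ⟨hpart, fun n η hη => ?_, fun ξ hξ => ?_⟩
  · obtain ⟨ξ, hξ, hηξ⟩ := exists_superset_mem_fiberPartition (hrefine n) hη
    exact ⟨ξ, hξ, by rw [sdiff_eq_empty.2 hηξ, measure_empty]⟩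
  · refine hna.measure_eq_zero_of_subsingleton
      (MeasurableSet.iInter fun n => (hpart n).2.1 _ (hξ n)) fun x hx y hy => ?_
    rw [mem_iInter] at hx hy
    exact hsep x y fun n => eq_of_mem_fiberPartition (hξ n) (hx n) (hy n)

theorem nonatomic_standard_carries_measureSensitiveSeq_general
    [MeasurableSpace X] [StandardBorelSpace X]
    (μ : Measure X) (hna : Nonatomic μ) :
    ∃ P : ℕ → Set (Set X), IsMeasureSensitiveSeq μ P := by
  obtain ⟨f, hf, hinj⟩ := MeasurableSpace.measurable_injection_nat_bool_of_countablySeparated X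
  let g (n : ℕ) (x : X) : Fin n → Bool := fun i => f x i
  have hg n : Measurable (g n) := measurable_pi_lambda _ fun i => measurable_pi_apply _ |>.comp hf
  have hrefine n x y (h : g (n + 1) x = g (n + 1) y) : g n x = g n y :=
    funext fun i => congrFun h i.castSucc
  have hsep x y (h : ∀ n, g n x = g n y) : x = y :=
    hinj <| funext fun i => congrFun (h (i + 1)) (Fin.last i)
  exact ⟨_, isMeasureSensitiveSeq_fiberPartition hna hg hrefine hsep⟩

/-- Every nonatomic standard probability space carries a measure-sensitive
sequence of partitions. -/
theorem nonatomic_standard_carries_measureSensitiveSeq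
    [MeasurableSpace X] [StandardBorelSpace X]
    (μ : Measure X) [IsProbabilityMeasure μ] (hna : Nonatomic μ) :
    ∃ P : ℕ → Set (Set X), IsMeasureSensitiveSeq μ P :=
  nonatomic_standard_carries_measureSensitiveSeq_general μ hna
end

section
/- If a probability space (X, 𝓑, μ) carries a measure-sensitive sequence of partitions, then it is nonatomic. -/
open MeasureTheory Set Function Filter
open scoped ENNReal

variable {X : Type*}

/-! An atom cannot be split by a countable measurable partition, so up to a null set it lies in a
single cell of each `P n`; it is then almost contained in the intersection of these cells, which
measure-sensitivity makes null. -/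

namespace IsMeasureAtom

variable [MeasurableSpace X] {μ : Measure X} {A : Set X}

lemma exists_mem_measure_sdiff_eq_zero (hA : IsMeasureAtom μ A) (hA_fin : μ A ≠ ∞)
    {P : Set (Set X)} (hP_count : P.Countable) (hP_meas : ∀ ξ ∈ P, MeasurableSet ξ)
    (hP_cover : ⋃₀ P = univ) : ∃ ξ ∈ P, μ (A \ ξ) = 0 := by
  obtain ⟨hA_meas, hA_pos, hA_atom⟩ := hA
  by_contra! hsplit
  have hnull : ∀ ξ ∈ P, μ (A ∩ ξ) = 0 := fun ξ hξ ↦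
    (hA_atom _ inter_subset_left (hA_meas.inter (hP_meas ξ hξ))).resolve_right fun hfull ↦ by
      refine hsplit ξ hξ ?_
      have hsum := measure_inter_add_sdiff A (hP_meas ξ hξ) (μ := μ)
      rw [hfull] at hsum
      exact (ENNReal.add_right_inj hA_fin).1 (hsum.trans (add_zero _).symm)
  have hA_eq : A = ⋃ ξ ∈ P, A ∩ ξ := by
    rw [← inter_iUnion₂, ← sUnion_eq_biUnion, hP_cover, inter_univ]
  exact hA_pos.ne' (hA_eq ▸ (measure_biUnion_null_iff hP_count).2 hnull)

lemma exists_seq_measure_le_iInter (hA : IsMeasureAtom μ A) (hA_fin : μ A ≠ ∞)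
    {P : ℕ → Set (Set X)} (hP : ∀ n, IsCountablePartition (P n)) :
    ∃ ξ : ℕ → Set X, (∀ n, ξ n ∈ P n) ∧ μ A ≤ μ (⋂ n, ξ n) := by
  choose ξ hξ hdiff using fun n ↦
    hA.exists_mem_measure_sdiff_eq_zero hA_fin (hP n).1 (hP n).2.1 (hP n).2.2.2.2
  refine ⟨ξ, hξ, measure_mono_ae (ae_le_set.2 ?_)⟩
  rw [sdiff_iInter]
  exact measure_iUnion_null hdiff

end IsMeasureAtom

/-- A probability space carrying a measure-sensitive sequence of partitions is
nonatomic. -/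
theorem nonatomic_of_measureSensitiveSeq
    [MeasurableSpace X] (μ : Measure X) [IsProbabilityMeasure μ]
    (h : ∃ P : ℕ → Set (Set X), IsMeasureSensitiveSeq μ P) :
    Nonatomic μ := by
  obtain ⟨P, hP, -, hsensitive⟩ := h
  intro A hA
  obtain ⟨ξ, hξ, hle⟩ := hA.exists_seq_measure_le_iInter (measure_ne_top μ A) hP
  rw [hsensitive ξ hξ, nonpos_iff_eq_zero] at hle
  exact hA.2.1.ne' hle
end

section
/- Let f : X → X be a measurable map on a probability space (X, 𝓑, μ) and P a countable partition. The following are equivalent: (i) the sequence P_n = ⋁_{k=0}^{n} f^{-k}(P) (whose element containing x is P_n(x) = ⋂_{k=0}^{n} f^{-k}(P(f^k(x)))) is a measure-sensitive sequence of partitions; (ii) μ({y ∈ X : f^n(y) ∈ P(f^n(x)) for all n ∈ ℕ}) = 0 for every x ∈ X; (iii) μ({y ∈ X : f^n(y) ∈ P(f^n(x)) for all n ∈ ℕ}) = 0 for μ-almost every x ∈ X. -/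
open MeasureTheory Set Function Filter
open scoped ENNReal

variable {X : Type*}

/-- The join `⋁_{k=0}^{n} f^{-k}(P)`: all nonempty intersections `⋂_{k=0}^{n} f^{-k}(ξ_k)`
with `ξ_k ∈ P`. -/
def joinSeq (f : X → X) (P : Set (Set X)) (n : ℕ) : Set (Set X) :=
  {A | A.Nonempty ∧ ∃ ξ : ℕ → Set X, (∀ k, k ≤ n → ξ k ∈ P) ∧
    A = ⋂ k ∈ Finset.range (n + 1), f^[k] ⁻¹' ξ k}

/-!
The set of points sharing the `P`-itinerary of `x` is the intersection of the decreasing chain of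
join atoms `P_n(x)`, and conversely every selection `ξ n ∈ P_n` with a point `x` in its
intersection is contained in that itinerary set; this gives (i) ⇔ (ii). Since the itinerary sets
are the classes of an equivalence relation, a class of positive measure consists entirely of
points whose class has positive measure, so it cannot be hidden in a null set; this gives
(iii) ⇒ (ii).
-/

def orbitCylinder (f : X → X) (ξ : ℕ → Set X) (n : ℕ) : Set X :=
  ⋂ k ∈ Finset.range (n + 1), f^[k] ⁻¹' ξ k

section

variable {f : X → X} {P : Set (Set X)}

theorem mem_orbitCylinder {ξ : ℕ → Set X} {n : ℕ} {y : X} :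
    y ∈ orbitCylinder f ξ n ↔ ∀ k ≤ n, f^[k] y ∈ ξ k := by
  simp only [orbitCylinder, mem_iInter, mem_preimage, Finset.mem_range, Nat.lt_succ_iff]

theorem orbitCylinder_congr {ξ η : ℕ → Set X} {n : ℕ} (h : ∀ k ≤ n, ξ k = η k) :
    orbitCylinder f ξ n = orbitCylinder f η n := by
  ext y
  simp +contextual only [mem_orbitCylinder, h]

theorem orbitCylinder_subset_of_le {ξ : ℕ → Set X} {m n : ℕ} (hmn : m ≤ n) :
    orbitCylinder f ξ n ⊆ orbitCylinder f ξ m := fun _ hy =>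
  mem_orbitCylinder.mpr fun k hk => mem_orbitCylinder.mp hy k (hk.trans hmn)

theorem mem_joinSeq_iff {A : Set X} {n : ℕ} :
    A ∈ joinSeq f P n ↔
      A.Nonempty ∧ ∃ ξ : ℕ → Set X, (∀ k ≤ n, ξ k ∈ P) ∧ A = orbitCylinder f ξ n :=
  Iff.rfl

theorem orbitCylinder_mem_joinSeq {ξ : ℕ → Set X} (hξ : ∀ k, ξ k ∈ P) {x : X}
    (hx : ∀ k, f^[k] x ∈ ξ k) (n : ℕ) : orbitCylinder f ξ n ∈ joinSeq f P n :=
  ⟨⟨x, mem_orbitCylinder.mpr fun k _ => hx k⟩, ξ, fun k _ => hξ k, rfl⟩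

theorem exists_joinSeq_superset {n : ℕ} {η : Set X} (hη : η ∈ joinSeq f P (n + 1)) :
    ∃ ξ ∈ joinSeq f P n, η ⊆ ξ := by
  obtain ⟨hne, ξ, hξ, rfl⟩ := hη
  have hsub := orbitCylinder_subset_of_le (f := f) (ξ := ξ) n.le_succ
  exact ⟨_, ⟨hne.mono hsub, ξ, fun k hk => hξ k (hk.trans n.le_succ), rfl⟩, hsub⟩

theorem iInter_subset_sameItinerary {ξ : ℕ → Set X} (hξ : ∀ n, ξ n ∈ joinSeq f P n) {x : X}
    (hx : x ∈ ⋂ n, ξ n) : ⋂ n, ξ n ⊆ sameItinerary f P x := by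
  intro y hy n
  obtain ⟨-, η, hη, hξη⟩ := mem_joinSeq_iff.mp (hξ n)
  have hmem {z : X} (hz : z ∈ ⋂ n, ξ n) : f^[n] z ∈ η n :=
    mem_orbitCylinder.mp (hξη ▸ mem_iInter.mp hz n) n le_rfl
  exact ⟨η n, hη n le_rfl, hmem hx, hmem hy⟩

end

section

variable [MeasurableSpace X] {f : X → X} {P : Set (Set X)}

namespace IsCountablePartition

theorem eq_of_mem_of_mem (hP : IsCountablePartition P) {ξ η : Set X} (hξ : ξ ∈ P)
    (hη : η ∈ P) {z : X} (hzξ : z ∈ ξ) (hzη : z ∈ η) : ξ = η :=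
  hP.2.2.2.1.elim hξ hη (not_disjoint_iff.mpr ⟨z, hzξ, hzη⟩)

theorem exists_mem (hP : IsCountablePartition P) (z : X) : ∃ ξ ∈ P, z ∈ ξ := by
  have hz : z ∈ ⋃₀ P := hP.2.2.2.2 ▸ mem_univ z
  exact mem_sUnion.mp hz

end IsCountablePartition

theorem sameItinerary_eq_of_mem (hP : IsCountablePartition P) {x y : X}
    (hy : y ∈ sameItinerary f P x) : sameItinerary f P y = sameItinerary f P x := by
  ext z
  refine ⟨fun hz n => ?_, fun hz n => ?_⟩ <;> obtain ⟨ξ, hξ, hxξ, hyξ⟩ := hy n <;>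
    obtain ⟨ζ, hζ, hζ₁, hzζ⟩ := hz n
  · exact ⟨ξ, hξ, hxξ, hP.eq_of_mem_of_mem hζ hξ hζ₁ hyξ ▸ hzζ⟩
  · exact ⟨ξ, hξ, hyξ, hP.eq_of_mem_of_mem hζ hξ hζ₁ hxξ ▸ hzζ⟩

theorem measure_sameItinerary_eq_zero_of_ae (μ : Measure X) (hP : IsCountablePartition P)
    (h : ∀ᵐ x ∂μ, μ (sameItinerary f P x) = 0) (x : X) : μ (sameItinerary f P x) = 0 := by
  by_contra hx
  have hsub : sameItinerary f P x ⊆ {y | μ (sameItinerary f P y) ≠ 0} := fun y hy =>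
    show _ ≠ 0 from (sameItinerary_eq_of_mem hP hy).symm ▸ hx
  exact hx (measure_mono_null hsub (ae_iff.mp h))

theorem sameItinerary_eq_iInter_orbitCylinder (hP : IsCountablePartition P) {ξ : ℕ → Set X}
    (hξ : ∀ k, ξ k ∈ P) {x : X} (hx : ∀ k, f^[k] x ∈ ξ k) :
    sameItinerary f P x = ⋂ n, orbitCylinder f ξ n := by
  ext y
  simp only [mem_iInter, mem_orbitCylinder]
  refine ⟨fun hy n k _ => ?_, fun hy n => ⟨ξ n, hξ n, hx n, hy n n le_rfl⟩⟩
  obtain ⟨η, hη, hxη, hyη⟩ := hy k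
  exact hP.eq_of_mem_of_mem hη (hξ k) hxη (hx k) ▸ hyη

theorem joinSeq_countable (hP : IsCountablePartition P) (n : ℕ) : (joinSeq f P n).Countable := by
  have : Countable P := hP.1.to_subtype
  let cyl : (Fin (n + 1) → P) → Set X := fun g =>
    orbitCylinder f (fun k => if hk : k < n + 1 then g ⟨k, hk⟩ else univ) n
  refine (countable_range cyl).mono ?_
  rintro A ⟨-, ξ, hξ, rfl⟩
  refine ⟨fun i => ⟨ξ i, hξ i (Nat.lt_succ_iff.mp i.isLt)⟩, orbitCylinder_congr fun k hk => ?_⟩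
  simp [Nat.lt_succ_of_le hk]

theorem measurableSet_of_mem_joinSeq (hf : Measurable f) (hP : IsCountablePartition P) {n : ℕ}
    {A : Set X} (hA : A ∈ joinSeq f P n) : MeasurableSet A := by
  obtain ⟨-, ξ, hξ, rfl⟩ := hA
  refine MeasurableSet.biInter (to_countable _) fun k hk => ?_
  exact (hP.2.1 _ (hξ k (Nat.lt_succ_iff.mp (Finset.mem_range.mp hk)))).preimage (hf.iterate k)

theorem joinSeq_pairwiseDisjoint (hP : IsCountablePartition P) (n : ℕ) :
    (joinSeq f P n).PairwiseDisjoint id := by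
  rintro _ ⟨-, ξ, hξ, rfl⟩ _ ⟨-, η, hη, rfl⟩ hne
  refine disjoint_left.mpr fun z hzξ hzη => hne (orbitCylinder_congr fun k hk => ?_)
  exact hP.eq_of_mem_of_mem (hξ k hk) (hη k hk) (mem_orbitCylinder.mp hzξ k hk)
    (mem_orbitCylinder.mp hzη k hk)

theorem sUnion_joinSeq (hP : IsCountablePartition P) (n : ℕ) : ⋃₀ joinSeq f P n = univ := by
  refine eq_univ_of_forall fun x => ?_
  choose ξ hξ hxξ using fun k => hP.exists_mem (f^[k] x)
  exact ⟨_, orbitCylinder_mem_joinSeq hξ hxξ n, mem_orbitCylinder.mpr fun k _ => hxξ k⟩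

theorem isCountablePartition_joinSeq (hf : Measurable f) (hP : IsCountablePartition P) (n : ℕ) :
    IsCountablePartition (joinSeq f P n) :=
  ⟨joinSeq_countable hP n, fun _ => measurableSet_of_mem_joinSeq hf hP, fun _ hA => hA.1,
    joinSeq_pairwiseDisjoint hP n, sUnion_joinSeq hP n⟩

theorem measure_sameItinerary_eq_zero_of_isMeasureSensitiveSeq {μ : Measure X}
    (hP : IsCountablePartition P) (h : IsMeasureSensitiveSeq μ (joinSeq f P)) (x : X) :
    μ (sameItinerary f P x) = 0 := by
  choose ξ hξ hxξ using fun k => hP.exists_mem (f^[k] x)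
  rw [sameItinerary_eq_iInter_orbitCylinder hP hξ hxξ]
  exact h.2.2 _ (orbitCylinder_mem_joinSeq hξ hxξ)

theorem isMeasureSensitiveSeq_joinSeq {μ : Measure X} (hf : Measurable f)
    (hP : IsCountablePartition P) (h : ∀ x, μ (sameItinerary f P x) = 0) :
    IsMeasureSensitiveSeq μ (joinSeq f P) := by
  refine ⟨isCountablePartition_joinSeq hf hP, fun n η hη => ?_, fun ξ hξ => ?_⟩
  · obtain ⟨ξ, hξ, hηξ⟩ := exists_joinSeq_superset hη
    exact ⟨ξ, hξ, by rw [sdiff_eq_empty.mpr hηξ, measure_empty]⟩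
  · obtain h_empty | ⟨x, hx⟩ := (⋂ n, ξ n).eq_empty_or_nonempty
    · rw [h_empty, measure_empty]
    · exact measure_mono_null (iInter_subset_sameItinerary hξ hx) (h x)

end

theorem measureSensitive_tfae_general
    [MeasurableSpace X] (μ : Measure X)
    (f : X → X) (hf : Measurable f) (P : Set (Set X)) (hP : IsCountablePartition P) :
    List.TFAE [IsMeasureSensitiveSeq μ (joinSeq f P),
      ∀ x : X, μ (sameItinerary f P x) = 0,
      ∀ᵐ x ∂μ, μ (sameItinerary f P x) = 0] := by
  tfae_have 1 → 2 := measure_sameItinerary_eq_zero_of_isMeasureSensitiveSeq hP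
  tfae_have 2 → 1 := isMeasureSensitiveSeq_joinSeq hf hP
  tfae_have 2 → 3 := Filter.Eventually.of_forall
  tfae_have 3 → 2 := measure_sameItinerary_eq_zero_of_ae μ hP
  tfae_finish

/-- For a measurable map `f` on a probability space and a countable partition
`P`, the following are equivalent: (i) the join sequence `P_n = ⋁_{k=0}^n f^{-k}(P)` is a
measure-sensitive sequence of partitions; (ii) the set of points with the same itinerary as
`x` is null for every `x`; (iii) the same holds for `μ`-a.e. `x`. -/
theorem measureSensitive_tfae
    [MeasurableSpace X] (μ : Measure X) [IsProbabilityMeasure μ]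
    (f : X → X) (hf : Measurable f) (P : Set (Set X)) (hP : IsCountablePartition P) :
    List.TFAE [IsMeasureSensitiveSeq μ (joinSeq f P),
      ∀ x : X, μ (sameItinerary f P x) = 0,
      ∀ᵐ x ∂μ, μ (sameItinerary f P x) = 0] :=
  measureSensitive_tfae_general μ f hf P hP
end

section
/- Let f : X → X be a totally ergodic measure-preserving map of a probability space (X, 𝓑, μ). Then every countable partition P having some element ξ with 0 < μ(ξ) < 1 is a measure-sensitive partition for f. -/
open MeasureTheory Set Function Filter
open scoped ENNReal

variable {X : Type*}

/-- `f` is ergodic (mod 0): every measurable set `A` with `A = f⁻¹ A` mod 0 satisfies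
`μ A = 0` or `μ (X \\ A) = 0`. -/
def ErgodicMod0 [MeasurableSpace X] (μ : Measure X) (f : X → X) : Prop :=
  ∀ A : Set X, MeasurableSet A → μ (symmDiff A (f ⁻¹' A)) = 0 → μ A = 0 ∨ μ Aᶜ = 0


/-! The itinerary of `x` determines its set `I ⊆ ℕ` of visit times to `ξ`, so it suffices that
`E I := {y | y visits ξ exactly at the times in I}` is null for every `I`. With
`I - k := {n | n + k ∈ I}` we have `E I ⊆ f⁻¹ (E (I - 1))`, so `k ↦ μ (E (I - k))` is
nondecreasing. The sets `E (I - k)` are disjoint for distinct shifts, so if `μ (E I) > 0`,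
finiteness of `μ` forces `I - k = I - (k + p)` for some `p > 0`. Then `E (I - k)` is
`f^p`-invariant mod 0 and of positive measure, hence of full measure by ergodicity of `f^p`;
yet it lies in `ξ` or in `ξᶜ`, both of measure `< 1`. -/

def visitTimes (f : X → X) (s : Set X) (x : X) : Set ℕ := {n | f^[n] x ∈ s}

theorem visitTimes_iterate (f : X → X) (s : Set X) (k : ℕ) (x : X) :
    visitTimes f s (f^[k] x) = (· + k) ⁻¹' visitTimes f s x := by
  ext n
  simp only [visitTimes, mem_ofPred_eq, mem_preimage, iterate_add_apply]

theorem visitTimes_eq_subset_preimage_iterate (f : X → X) (s : Set X) (k : ℕ) (I : Set ℕ) :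
    visitTimes f s ⁻¹' {I} ⊆ f^[k] ⁻¹' (visitTimes f s ⁻¹' {(· + k) ⁻¹' I}) := by
  intro x hx
  simp only [mem_preimage, mem_singleton_iff] at hx ⊢
  rw [visitTimes_iterate, hx]

theorem MeasureTheory.MeasurePreserving.measure_symmDiff_preimage_eq_zero_of_subset
    [MeasurableSpace X] {μ : Measure X} [IsFiniteMeasure μ] {g : X → X}
    (hg : MeasurePreserving g μ μ) {E : Set X} (hE : MeasurableSet E) (hsub : E ⊆ g ⁻¹' E) :
    μ (symmDiff E (g ⁻¹' E)) = 0 :=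
  measure_symmDiff_eq_zero_iff.2 <| ae_eq_of_subset_of_measure_ge hsub
    (hg.measure_preimage hE.nullMeasurableSet).le hE.nullMeasurableSet (measure_ne_top μ _)

section Measurable

variable [MeasurableSpace X] {μ : Measure X} {f : X → X} {s : Set X}

theorem measurable_visitTimes (hf : Measurable f) (hs : MeasurableSet s) :
    Measurable (visitTimes f s) :=
  measurable_set_iff.2 fun n => measurable_mem.2 (hs.preimage (hf.iterate n))

theorem measurableSet_visitTimes_eq (hf : Measurable f) (hs : MeasurableSet s) (I : Set ℕ) :
    MeasurableSet (visitTimes f s ⁻¹' {I}) :=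
  measurable_visitTimes hf hs (measurableSet_singleton I)

theorem measure_visitTimes_eq_lt_one [IsProbabilityMeasure μ] (hs : MeasurableSet s)
    (h0 : 0 < μ s) (h1 : μ s < 1) (I : Set ℕ) : μ (visitTimes f s ⁻¹' {I}) < 1 := by
  by_cases hI : 0 ∈ I
  · refine (measure_mono fun x (hx : visitTimes f s x = I) => ?_).trans_lt h1
    exact (hx ▸ hI : 0 ∈ visitTimes f s x)
  · refine (measure_mono fun x (hx : visitTimes f s x = I) => ?_).trans_lt
      (by simpa using prob_compl_lt_one_sub_of_lt_prob h0 hs)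
    exact fun hxs => hI (hx ▸ hxs : 0 ∈ I)

theorem MeasureTheory.MeasurePreserving.measure_visitTimes_eq_le_shift
    (hf : MeasurePreserving f μ μ) (hs : MeasurableSet s) (k : ℕ) (I : Set ℕ) :
    μ (visitTimes f s ⁻¹' {I}) ≤ μ (visitTimes f s ⁻¹' {(· + k) ⁻¹' I}) :=
  calc μ (visitTimes f s ⁻¹' {I})
      ≤ μ (f^[k] ⁻¹' (visitTimes f s ⁻¹' {(· + k) ⁻¹' I})) :=
        measure_mono (visitTimes_eq_subset_preimage_iterate f s k I)
    _ = μ (visitTimes f s ⁻¹' {(· + k) ⁻¹' I}) :=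
        (hf.iterate k).measure_preimage
          (measurableSet_visitTimes_eq hf.measurable hs _).nullMeasurableSet

theorem MeasureTheory.MeasurePreserving.exists_shift_periodic_of_measure_visitTimes_eq_ne_zero
    [IsFiniteMeasure μ] (hf : MeasurePreserving f μ μ) (hs : MeasurableSet s) {I : Set ℕ}
    (hI : μ (visitTimes f s ⁻¹' {I}) ≠ 0) :
    ∃ k p, 0 < p ∧ (· + p) ⁻¹' ((· + k) ⁻¹' I) = (· + k) ⁻¹' I := by
  have hsum : μ univ < ∑' k : ℕ, μ (visitTimes f s ⁻¹' {(· + k) ⁻¹' I}) :=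
    calc μ univ < ∞ := measure_lt_top μ univ
      _ = ∑' _ : ℕ, μ (visitTimes f s ⁻¹' {I}) := (ENNReal.tsum_const_eq_top_of_ne_zero hI).symm
      _ ≤ _ := ENNReal.tsum_le_tsum fun k => hf.measure_visitTimes_eq_le_shift hs k I
  obtain ⟨i, j, hij, x, hxi, hxj⟩ := exists_nonempty_inter_of_measure_univ_lt_tsum_measure μ
    (fun k => (measurableSet_visitTimes_eq hf.measurable hs _).nullMeasurableSet) hsum
  have heq : (· + i) ⁻¹' I = (· + j) ⁻¹' I := hxi.symm.trans hxj
  wlog hlt : i < j generalizing i j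
  · exact this j i hij.symm hxj hxi heq.symm (by omega)
  refine ⟨i, j - i, by omega, ?_⟩
  rw [preimage_preimage, heq]
  congr 1
  ext n
  omega

theorem measure_visitTimes_eq_eq_zero [IsProbabilityMeasure μ] (hf : MeasurePreserving f μ μ)
    (hte : ∀ n : ℕ, 0 < n → ErgodicMod0 μ f^[n]) (hs : MeasurableSet s) (h0 : 0 < μ s)
    (h1 : μ s < 1) (I : Set ℕ) : μ (visitTimes f s ⁻¹' {I}) = 0 := by
  by_contra hI
  obtain ⟨k, p, hp, hper⟩ := hf.exists_shift_periodic_of_measure_visitTimes_eq_ne_zero hs hI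
  set J := (· + k) ⁻¹' I
  have hE : MeasurableSet (visitTimes f s ⁻¹' {J}) :=
    measurableSet_visitTimes_eq hf.measurable hs J
  have hJ : μ (visitTimes f s ⁻¹' {J}) ≠ 0 :=
    ((pos_iff_ne_zero.2 hI).trans_le (hf.measure_visitTimes_eq_le_shift hs k I)).ne'
  have hinv := (hf.iterate p).measure_symmDiff_preimage_eq_zero_of_subset hE
    (by simpa only [hper] using visitTimes_eq_subset_preimage_iterate f s p J)
  rcases hte p hp _ hE hinv with hnull | hfull
  · exact hJ hnull
  · exact (measure_visitTimes_eq_lt_one hs h0 h1 J).ne ((prob_compl_eq_zero_iff hE).1 hfull)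

end Measurable

theorem sameItinerary_subset_visitTimes_eq {P : Set (Set X)} (hP : P.PairwiseDisjoint id)
    {ξ : Set X} (hξ : ξ ∈ P) (f : X → X) (x : X) :
    sameItinerary f P x ⊆ visitTimes f ξ ⁻¹' {visitTimes f ξ x} := by
  intro y hy
  ext n
  obtain ⟨ζ, hζ, hxζ, hyζ⟩ := hy n
  constructor
  · intro (hyξ : f^[n] y ∈ ξ)
    obtain rfl : ζ = ξ := hP.elim hζ hξ (not_disjoint_iff.2 ⟨_, hyζ, hyξ⟩)
    exact hxζ
  · intro (hxξ : f^[n] x ∈ ξ)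
    obtain rfl : ζ = ξ := hP.elim hζ hξ (not_disjoint_iff.2 ⟨_, hxζ, hxξ⟩)
    exact hyζ

/-- For a totally ergodic measure-preserving map of a probability space, every
countable partition having an element of measure strictly between 0 and 1 is
measure-sensitive. -/
theorem totallyErgodic_partition_isMeasureSensitive
    [MeasurableSpace X] (μ : Measure X) [IsProbabilityMeasure μ]
    (f : X → X) (hpres : MeasurePreserving f μ μ)
    (hte : ∀ n : ℕ, 0 < n → ErgodicMod0 μ f^[n])
    (P : Set (Set X)) (hP : IsCountablePartition P)
    (ξ : Set X) (hξ : ξ ∈ P) (h0 : 0 < μ ξ) (h1 : μ ξ < 1) :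
    IsMeasureSensitivePartition μ f P := by
  have ⟨_, hmeas, _, hdisj, _⟩ := hP
  refine ⟨hP, fun x => measure_mono_null (sameItinerary_subset_visitTimes_eq hdisj hξ f x) ?_⟩
  exact measure_visitTimes_eq_eq_zero hpres hte (hmeas ξ hξ) h0 h1 _
end

section
/- If a probability space (X, 𝓑, μ) carries a measure-expansive measurable map, then it is nonatomic. -/
/-!
An atom `A` of finite measure cannot be split by a countable measurable partition: for each
`n` it lies, up to a null set, in a single preimage `f^[n] ⁻¹' ξₙ` with `ξₙ ∈ P`. Intersecting
over all `n` leaves a set of full measure in `A` all of whose points share one `P`-itinerary,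
which a measure-sensitive partition forbids.
-/

open MeasureTheory Set Function Filter
open scoped ENNReal

variable {X : Type*}

theorem iInter_preimage_iterate_subset_sameItinerary (f : X → X) {P : Set (Set X)}
    {ξ : ℕ → Set X} (hξ : ∀ n, ξ n ∈ P) {x : X} (hx : x ∈ ⋂ n, f^[n] ⁻¹' ξ n) :
    ⋂ n, f^[n] ⁻¹' ξ n ⊆ sameItinerary f P x := fun _ hy n =>
  ⟨ξ n, hξ n, mem_iInter.1 hx n, mem_iInter.1 hy n⟩

section

variable [MeasurableSpace X] {μ : Measure X} {A : Set X}

namespace IsMeasureAtom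

theorem measure_inter_eq_zero_or_measure_diff_eq_zero (hA : IsMeasureAtom μ A)
    (hA_fin : μ A ≠ ∞) {B : Set X} (hB : MeasurableSet B) :
    μ (A ∩ B) = 0 ∨ μ (A \ B) = 0 := by
  refine (hA.2.2 (A ∩ B) inter_subset_left (hA.1.inter hB)).imp_right fun h_full => ?_
  have h_split := measure_inter_add_sdiff A hB (μ := μ)
  rw [h_full] at h_split
  exact (ENNReal.add_right_inj hA_fin).1 (h_split.trans (add_zero _).symm)

theorem exists_measure_diff_eq_zero (hA : IsMeasureAtom μ A) (hA_fin : μ A ≠ ∞)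
    {S : Set (Set X)} (hS : S.Countable) (hS_meas : ∀ ξ ∈ S, MeasurableSet ξ)
    (hA_cover : A ⊆ ⋃₀ S) : ∃ ξ ∈ S, μ (A \ ξ) = 0 := by
  by_contra! h
  have h_null : ∀ ξ ∈ S, μ (A ∩ ξ) = 0 := fun ξ hξ =>
    (hA.measure_inter_eq_zero_or_measure_diff_eq_zero hA_fin (hS_meas ξ hξ)).resolve_right
      (h ξ hξ)
  have h_sub : A ⊆ ⋃ ξ ∈ S, A ∩ ξ := by
    rw [← inter_iUnion₂, ← sUnion_eq_biUnion]
    exact subset_inter subset_rfl hA_cover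
  exact hA.2.1.ne' (measure_mono_null h_sub ((measure_biUnion_null_iff hS).2 h_null))

theorem exists_measure_diff_preimage_eq_zero (hA : IsMeasureAtom μ A) (hA_fin : μ A ≠ ∞)
    {Y : Type*} [MeasurableSpace Y] {g : X → Y} (hg : Measurable g) {P : Set (Set Y)} (hP : IsCountablePartition P) :
    ∃ ξ ∈ P, μ (A \ g ⁻¹' ξ) = 0 := by
  obtain ⟨hP_count, hP_meas, -, -, hP_cover⟩ := hP
  have h_cover : A ⊆ ⋃₀ ((g ⁻¹' ·) '' P) := by
    rw [sUnion_image, ← preimage_iUnion₂, ← sUnion_eq_biUnion, hP_cover, preimage_univ]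
    exact subset_univ A
  obtain ⟨-, ⟨ξ, hξ, rfl⟩, h_null⟩ := hA.exists_measure_diff_eq_zero hA_fin
    (hP_count.image _) (forall_mem_image.2 fun ξ hξ => hg (hP_meas ξ hξ)) h_cover
  exact ⟨ξ, hξ, h_null⟩

end IsMeasureAtom

end

/-- A probability space carrying a measure-expansive measurable map is
nonatomic. -/
theorem nonatomic_of_measureExpansive
    [MeasurableSpace X] (μ : Measure X) [IsProbabilityMeasure μ]
    (f : X → X) (hf : Measurable f) (hexp : MeasureExpansive μ f) :
    Nonatomic μ := by
  rintro A hA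
  obtain ⟨P, hP, h_sensitive⟩ := hexp
  choose ξ hξP hξ using fun n =>
    hA.exists_measure_diff_preimage_eq_zero (measure_ne_top μ A) (hf.iterate n) hP
  set T := ⋂ n, f^[n] ⁻¹' ξ n
  have hAT : μ (A ∩ T) = μ A :=
    measure_inter_conull' (by rw [sdiff_iInter]; exact measure_iUnion_null hξ)
  obtain ⟨x, -, hxT⟩ := nonempty_of_measure_ne_zero (hAT ▸ hA.2.1.ne')
  have h_itin := iInter_preimage_iterate_subset_sameItinerary f hξP hxT
  exact hA.2.1.ne' (hAT ▸ measure_mono_null (inter_subset_right.trans h_itin) (h_sensitive x))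
end

section
/- Every measure-expansive measurable map f : X → X of a measure space (X, 𝓑, μ) is eventually aperiodic, and in particular aperiodic. -/
open MeasureTheory Set Function Filter
open scoped ENNReal

variable {X : Type*}

/-- `f` is aperiodic: for every `n ≥ 1`, any measurable set on which `f^n x = x` is null. -/
def AperiodicMap [MeasurableSpace X] (μ : Measure X) (f : X → X) : Prop :=
  ∀ n : ℕ, 0 < n → ∀ A : Set X, MeasurableSet A → (∀ x ∈ A, f^[n] x = x) → μ A = 0

/-- `f` is eventually aperiodic: for every `n ≥ 1` and `k ∈ ℕ`, any measurable set `A` such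
that each `x ∈ A` satisfies `f^{n+i} x = f^i x` for some `0 ≤ i ≤ k` is null. -/
def EventuallyAperiodicMap [MeasurableSpace X] (μ : Measure X) (f : X → X) : Prop :=
  ∀ n k : ℕ, 0 < n → ∀ A : Set X, MeasurableSet A →
    (∀ x ∈ A, ∃ i ≤ k, f^[n + i] x = f^[i] x) → μ A = 0

/-! If every point of `A` becomes `n`-periodic by time `k`, then two points of `A`
whose itineraries agree up to time `n + k` have the same itinerary forever. So `A` is covered
by the countably many sets of points of `A` sharing a given itinerary prefix of length `n + k`,
each of which lies in some `sameItinerary f P x` and is therefore null. -/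

theorem Function.IsPeriodicPt.iterate_of_le {f : X → X} {x : X} {n i m : ℕ}
    (h : IsPeriodicPt f n (f^[i] x)) (him : i ≤ m) : IsPeriodicPt f n (f^[m] x) := by
  simpa only [← iterate_add_apply, Nat.sub_add_cancel him] using h.apply_iterate (m - i)

theorem mem_sameItinerary_of_forall_lt {f : X → X} {P : Set (Set X)} {x y : X} {n k : ℕ}
    (hn : 0 < n) (hx : IsPeriodicPt f n (f^[k] x)) (hy : IsPeriodicPt f n (f^[k] y))
    (hprefix : ∀ m < n + k, ∃ ξ ∈ P, f^[m] x ∈ ξ ∧ f^[m] y ∈ ξ) :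
    y ∈ sameItinerary f P x := by
  intro m
  induction m using Nat.strong_induction_on with
  | _ m ih =>
    rcases lt_or_ge m (n + k) with hm | hm
    · exact hprefix m hm
    · have hback : ∀ z, IsPeriodicPt f n (f^[k] z) → f^[m] z = f^[m - n] z := fun z hz => by
        rw [← (hz.iterate_of_le (m := m - n) (by omega)).eq, ← iterate_add_apply,
          Nat.add_sub_cancel' (by omega)]
      rw [hback x hx, hback y hy]
      exact ih (m - n) (by omega)

theorem measure_eq_zero_of_forall_lt_mem_sameItinerary [MeasurableSpace X] {μ : Measure X}
    {f : X → X} {P : Set (Set X)} (hPc : P.Countable) (hPu : ⋃₀ P = univ)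
    (hnull : ∀ x, μ (sameItinerary f P x) = 0) {A : Set X} (N : ℕ)
    (hA : ∀ x ∈ A, ∀ y ∈ A, (∀ m < N, ∃ ξ ∈ P, f^[m] x ∈ ξ ∧ f^[m] y ∈ ξ) →
      y ∈ sameItinerary f P x) :
    μ A = 0 := by
  have := hPc.to_subtype
  let piece (w : Fin N → P) : Set X := {y ∈ A | ∀ j, f^[j] y ∈ (w j : Set X)}
  have hcover : A ⊆ ⋃ w, piece w := fun y hy => by
    have hcell (j : Fin N) : ∃ ξ : P, f^[j] y ∈ (ξ : Set X) := by
      simpa [← hPu] using mem_univ (f^[j] y)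
    choose w hw using hcell
    exact mem_iUnion.2 ⟨w, hy, hw⟩
  refine measure_mono_null hcover (measure_iUnion_null fun w => ?_)
  rcases (piece w).eq_empty_or_nonempty with hempty | ⟨x, hxA, hxw⟩
  · rw [hempty, measure_empty]
  · refine measure_mono_null (fun y ⟨hyA, hyw⟩ => hA x hxA y hyA fun m hm => ?_) (hnull x)
    exact ⟨w ⟨m, hm⟩, (w ⟨m, hm⟩).2, hxw ⟨m, hm⟩, hyw ⟨m, hm⟩⟩

theorem eventuallyAperiodicMap_of_measure_sameItinerary_eq_zero [MeasurableSpace X]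
    {μ : Measure X} {f : X → X} {P : Set (Set X)} (hPc : P.Countable) (hPu : ⋃₀ P = univ)
    (hnull : ∀ x, μ (sameItinerary f P x) = 0) : EventuallyAperiodicMap μ f := by
  intro n k hn A _ hA
  have hperiodic : ∀ x ∈ A, IsPeriodicPt f n (f^[k] x) := fun x hx => by
    obtain ⟨i, hik, hi⟩ := hA x hx
    exact IsPeriodicPt.iterate_of_le (by rwa [IsPeriodicPt, IsFixedPt, ← iterate_add_apply]) hik
  exact measure_eq_zero_of_forall_lt_mem_sameItinerary hPc hPu hnull (n + k)
    fun x hx y hy => mem_sameItinerary_of_forall_lt hn (hperiodic x hx) (hperiodic y hy)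

theorem EventuallyAperiodicMap.aperiodicMap [MeasurableSpace X] {μ : Measure X} {f : X → X}
    (h : EventuallyAperiodicMap μ f) : AperiodicMap μ f :=
  fun n hn A hAm hA => h n 0 hn A hAm fun x hx => ⟨0, le_rfl, hA x hx⟩

theorem measureExpansive_eventuallyAperiodic_general
    [MeasurableSpace X] (μ : Measure X)
    (f : X → X) (hexp : MeasureExpansive μ f) :
    EventuallyAperiodicMap μ f ∧ AperiodicMap μ f := by
  obtain ⟨P, ⟨hPc, -, -, -, hPu⟩, hnull⟩ := hexp
  have h := eventuallyAperiodicMap_of_measure_sameItinerary_eq_zero hPc hPu hnull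
  exact ⟨h, h.aperiodicMap⟩

/-- Every measure-expansive measurable map is eventually aperiodic, and in
particular aperiodic. -/
theorem measureExpansive_eventuallyAperiodic
    [MeasurableSpace X] (μ : Measure X)
    (f : X → X) (hf : Measurable f) (hexp : MeasureExpansive μ f) :
    EventuallyAperiodicMap μ f ∧ AperiodicMap μ f :=
  measureExpansive_eventuallyAperiodic_general μ f hexp
end

section
/- Let f : X → X be a measurable map on a measure space (X, 𝓑, μ) with μ(X) > 0. If f^k = f for some integer k ≥ 2, then f is not measure-expansive. -/
open MeasureTheory Set Function Filter
open scoped ENNReal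

variable {X : Type*}

/-!
Since `f^k = f`, the iterates of `f` take only finitely many values, so the itinerary of a point
with respect to a countable partition is determined by finitely many letters. The sets of points
with a prescribed finite word are therefore countably many; each lies inside a single itinerary
class, hence is null for a measure-sensitive partition, and together they cover the space.
-/

def iterateCylinder (f : X → X) (g : range (fun n : ℕ => f^[n]) → Set X) : Set X :=
  {y | ∀ h, (h : X → X) y ∈ g h}

theorem iUnion_iterateCylinder_eq_univ {P : Set (Set X)} (hP : ⋃₀ P = univ) (f : X → X) :
    ⋃ g ∈ {g | ∀ h, g h ∈ P}, iterateCylinder f g = univ := by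
  refine eq_univ_of_forall fun y => ?_
  have hy : ∀ h : range (fun n : ℕ => f^[n]), ∃ ξ ∈ P, (h : X → X) y ∈ ξ := fun h =>
    mem_sUnion.mp (hP ▸ mem_univ _)
  choose g hgP hyg using hy
  exact mem_biUnion hgP hyg

theorem iterateCylinder_subset_sameItinerary {f : X → X} {P : Set (Set X)}
    {g : range (fun n : ℕ => f^[n]) → Set X} (hg : ∀ h, g h ∈ P) {x : X}
    (hx : x ∈ iterateCylinder f g) : iterateCylinder f g ⊆ sameItinerary f P x :=
  fun _ hy n => ⟨g ⟨f^[n], n, rfl⟩, hg _, hx _, hy _⟩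

theorem not_measureExpansive_of_finite_range_iterate [MeasurableSpace X] {μ : Measure X}
    (hμ : μ univ ≠ 0) {f : X → X} (hfin : (range fun n : ℕ => f^[n]).Finite) :
    ¬ MeasureExpansive μ f := by
  rintro ⟨P, ⟨hPc, -, -, -, hPcov⟩, hnull⟩
  have : Finite (range fun n : ℕ => f^[n]) := hfin.to_subtype
  have hcyl_null : ∀ g ∈ {g | ∀ h, g h ∈ P}, μ (iterateCylinder f g) = 0 := by
    intro g hg
    rcases (iterateCylinder f g).eq_empty_or_nonempty with hempty | ⟨x, hx⟩
    · rw [hempty, measure_empty]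
    · exact measure_mono_null (iterateCylinder_subset_sameItinerary hg hx) (hnull x)
  apply hμ
  rw [← iUnion_iterateCylinder_eq_univ hPcov f]
  exact (measure_biUnion_null_iff (countable_pi fun _ => hPc)).mpr hcyl_null

theorem exists_lt_iterate_eq_of_iterate_eq_self {f : X → X} {k : ℕ} (hk : 2 ≤ k)
    (hfk : f^[k] = f) (n : ℕ) : ∃ m < k, f^[n] = f^[m] := by
  induction n using Nat.strong_induction_on with
  | _ n ih =>
    rcases lt_or_ge n k with hn | hn
    · exact ⟨n, hn, rfl⟩
    · have hshift : f^[n] = f^[n - k + 1] := by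
        rw [← Nat.sub_add_cancel hn, iterate_add, hfk, Nat.sub_add_cancel hn, iterate_succ]
      obtain ⟨m, hm, hfm⟩ := ih (n - k + 1) (by omega)
      exact ⟨m, hm, hshift.trans hfm⟩

theorem finite_range_iterate_of_iterate_eq_self {f : X → X} {k : ℕ} (hk : 2 ≤ k)
    (hfk : f^[k] = f) : (range fun n : ℕ => f^[n]).Finite := by
  refine ((finite_Iio k).image fun n : ℕ => f^[n]).subset ?_
  rintro _ ⟨n, rfl⟩
  obtain ⟨m, hm, hfm⟩ := exists_lt_iterate_eq_of_iterate_eq_self hk hfk n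
  exact ⟨m, hm, hfm.symm⟩

theorem not_measureExpansive_of_iterate_eq_self_general
    [MeasurableSpace X] (μ : Measure X) (hμ : 0 < μ Set.univ)
    (f : X → X) (k : ℕ) (hk : 2 ≤ k) (hfk : f^[k] = f) :
    ¬ MeasureExpansive μ f :=
  not_measureExpansive_of_finite_range_iterate hμ.ne'
    (finite_range_iterate_of_iterate_eq_self hk hfk)

/-- If `μ(X) > 0` and `f^k = f` for some integer `k ≥ 2`, then `f` is not
measure-expansive. -/
theorem not_measureExpansive_of_iterate_eq_self
    [MeasurableSpace X] (μ : Measure X) (hμ : 0 < μ Set.univ)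
    (f : X → X) (hf : Measurable f) (k : ℕ) (hk : 2 ≤ k) (hfk : f^[k] = f) :
    ¬ MeasureExpansive μ f :=
  not_measureExpansive_of_iterate_eq_self_general μ hμ f k hk hfk
end

section
/- Let f : X → X be a measurable map of a measure space (X, 𝓑, μ) and k ∈ ℕ⁺. Then f is measure-expansive if and only if f^k is measure-expansive. -/
open MeasureTheory Set Function Filter
open scoped ENNReal

variable {X : Type*}

/-!
A point with the same `f`-itinerary as `x` has in particular the same `f^k`-itinerary, so a
partition sensitive for `f` is sensitive for `f^k`. Conversely, the `f^k`-itinerary of `y` with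
respect to the join `P ∨ f⁻¹P ∨ ⋯ ∨ f⁻⁽ᵏ⁻¹⁾P` records the `f`-itinerary of `y` with respect
to `P`, since every `n` is `n % k + k * (n / k)`; so that join is sensitive for `f^k` whenever
`P` is sensitive for `f`.
-/

/-- The join `⋁_{i<k} f⁻ⁱ P`. -/
def iterateJoin (f : X → X) (P : Set (Set X)) (k : ℕ) : Set (Set X) :=
  {S | S.Nonempty ∧ ∃ ξ : Fin k → Set X, (∀ i, ξ i ∈ P) ∧ S = ⋂ i : Fin k, f^[i] ⁻¹' ξ i}

section iterateJoin

variable {f : X → X} {P : Set (Set X)} {k : ℕ}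

theorem exists_mem_of_mem_iterateJoin {S : Set X} (hS : S ∈ iterateJoin f P k) {x y : X}
    (hx : x ∈ S) (hy : y ∈ S) {i : ℕ} (hi : i < k) :
    ∃ ξ ∈ P, f^[i] x ∈ ξ ∧ f^[i] y ∈ ξ := by
  obtain ⟨-, ξ, hξP, rfl⟩ := hS
  simp only [mem_iInter, mem_preimage] at hx hy
  exact ⟨ξ ⟨i, hi⟩, hξP _, hx _, hy _⟩

theorem sameItinerary_subset_iterate (f : X → X) (P : Set (Set X)) (k : ℕ) (x : X) :
    sameItinerary f P x ⊆ sameItinerary f^[k] P x := by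
  intro y hy n
  simpa only [← iterate_mul] using hy (k * n)

theorem sameItinerary_iterate_iterateJoin_subset (hk : 0 < k) (x : X) :
    sameItinerary f^[k] (iterateJoin f P k) x ⊆ sameItinerary f P x := by
  intro y hy n
  obtain ⟨S, hS, hxS, hyS⟩ := hy (n / k)
  have hn (z : X) : f^[n] z = f^[n % k] ((f^[k])^[n / k] z) := by
    rw [← iterate_mul, ← iterate_add_apply, Nat.mod_add_div]
  simpa only [hn] using
    exists_mem_of_mem_iterateJoin hS hxS hyS (Nat.mod_lt n hk)

variable [MeasurableSpace X]

theorem IsCountablePartition.exists_mem_s15 (hP : IsCountablePartition P) (x : X) :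
    ∃ ξ ∈ P, x ∈ ξ := by
  rw [← mem_sUnion, hP.2.2.2.2]
  exact mem_univ x

theorem IsCountablePartition.pairwiseDisjoint_iterateJoin (hP : IsCountablePartition P) :
    (iterateJoin f P k).PairwiseDisjoint id := by
  rintro S ⟨-, ξ, hξP, rfl⟩ T ⟨-, η, hηP, rfl⟩ hST
  refine disjoint_left.mpr fun y hyS hyT => hST ?_
  simp only [id_eq, mem_iInter, mem_preimage] at hyS hyT
  have hξη : ξ = η := funext fun i => hP.2.2.2.1.elim_set (hξP i) (hηP i) _ (hyS i) (hyT i)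
  rw [hξη]

theorem IsCountablePartition.sUnion_iterateJoin (hP : IsCountablePartition P) :
    ⋃₀ iterateJoin f P k = univ := by
  refine eq_univ_of_forall fun x => ?_
  choose ξ hξP hxξ using fun i : Fin k => hP.exists_mem_s15 (f^[i] x)
  have hx : x ∈ ⋂ i : Fin k, f^[i] ⁻¹' ξ i := mem_iInter.mpr hxξ
  exact ⟨_, ⟨⟨x, hx⟩, ξ, hξP, rfl⟩, hx⟩

theorem isCountablePartition_iterateJoin (hP : IsCountablePartition P) (hf : Measurable f)
    (k : ℕ) : IsCountablePartition (iterateJoin f P k) := by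
  refine ⟨?_, ?_, fun S hS => hS.1, hP.pairwiseDisjoint_iterateJoin, hP.sUnion_iterateJoin⟩
  · have hsub : iterateJoin f P k ⊆
        (fun ξ : Fin k → Set X => ⋂ i : Fin k, f^[i] ⁻¹' ξ i) '' pi univ fun _ => P := by
      rintro S ⟨-, ξ, hξP, rfl⟩
      exact ⟨ξ, fun i _ => hξP i, rfl⟩
    exact ((countable_univ_pi fun _ => hP.1).image _).mono hsub
  · rintro S ⟨-, ξ, hξP, rfl⟩
    exact MeasurableSet.iInter fun i => hf.iterate _ (hP.2.1 _ (hξP i))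

end iterateJoin

/-- For any `k ≥ 1`, `f` is measure-expansive if and only if `f^k` is. -/
theorem measureExpansive_iterate_iff
    [MeasurableSpace X] (μ : Measure X)
    (f : X → X) (hf : Measurable f) (k : ℕ) (hk : 0 < k) :
    MeasureExpansive μ f ↔ MeasureExpansive μ f^[k] := by
  constructor
  · rintro ⟨P, hP, hnull⟩
    exact ⟨iterateJoin f P k, isCountablePartition_iterateJoin hP hf k, fun x =>
      measure_mono_null (sameItinerary_iterate_iterateJoin_subset hk x) (hnull x)⟩
  · rintro ⟨P, hP, hnull⟩
    exact ⟨P, hP, fun x => measure_mono_null (sameItinerary_subset_iterate f P k x) (hnull x)⟩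
end

section
/- Every measure-expansive negative nonsingular measurable map of a probability space is aperiodic*. -/
open MeasureTheory Set Function Filter
open scoped ENNReal

variable {X : Type*}

/-!
Suppose `A` has positive measure and every measurable `B ⊆ A` satisfies `μ(B \ f^{-n}B) = 0`.
Then `f^n` fixes every measurable set modulo null sets inside `A`, hence so does every power
`f^{nk}`, and almost every point of `A` has an `n`-periodic `P`-itinerary. Some cylinder of
length `n` meets `A` in positive measure; its points with periodic itinerary all share one
itinerary, which contradicts measure-sensitivity.
-/

section

variable [MeasurableSpace X] {μ ν : Measure X} {f g : X → X}

theorem preimage_ae_eq_restrict_of_forall_diff_preimage_null {A : Set X} (hA : MeasurableSet A)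
    (h : ∀ B : Set X, MeasurableSet B → B ⊆ A → μ (B \ g ⁻¹' B) = 0)
    {C : Set X} (hC : MeasurableSet C) : g ⁻¹' C =ᵐ[μ.restrict A] C := by
  rw [ae_eq_set, Measure.restrict_apply' hA, Measure.restrict_apply' hA]
  constructor
  · refine measure_mono_null ?_ (h (A \ C) (hA.diff hC) sdiff_subset)
    rintro y ⟨⟨hyC, hyC'⟩, hyA⟩
    exact ⟨⟨hyA, hyC'⟩, fun hy => hy.2 hyC⟩
  · refine measure_mono_null ?_ (h (A ∩ C) (hA.inter hC) inter_subset_left)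
    rintro y ⟨⟨hyC, hyC'⟩, hyA⟩
    exact ⟨⟨hyA, hyC⟩, fun hy => hyC' hy.2⟩

theorem iterate_preimage_ae_eq_of_forall_preimage_ae_eq (hg : Measurable g)
    (h : ∀ C : Set X, MeasurableSet C → g ⁻¹' C =ᵐ[ν] C) {C : Set X} (hC : MeasurableSet C) :
    ∀ k : ℕ, g^[k] ⁻¹' C =ᵐ[ν] C
  | 0 => EventuallyEq.rfl
  | k + 1 => by
    rw [iterate_succ, preimage_comp]
    exact (h _ (hg.iterate k hC)).trans
      (iterate_preimage_ae_eq_of_forall_preimage_ae_eq hg h hC k)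

theorem iterate_preimage_ae_eq_iterate_mod (hf : Measurable f) {n : ℕ}
    (h : ∀ C : Set X, MeasurableSet C → f^[n] ⁻¹' C =ᵐ[ν] C) {ξ : Set X} (hξ : MeasurableSet ξ)
    (m : ℕ) : f^[m] ⁻¹' ξ =ᵐ[ν] f^[m % n] ⁻¹' ξ := by
  have hm : f^[m] = f^[m % n] ∘ (f^[n])^[m / n] := by
    rw [← iterate_mul, ← iterate_add, Nat.mod_add_div]
  rw [hm, preimage_comp]
  exact iterate_preimage_ae_eq_of_forall_preimage_ae_eq (hf.iterate n)
    h (hf.iterate _ hξ) (m / n)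

theorem exists_cylinder_measure_pos {P : Set (Set X)} (hP : P.Countable)
    (hcover : ⋃₀ P = univ) (hν : ν ≠ 0) (f : X → X) (n : ℕ) :
    ∃ w : Fin n → P, 0 < ν (⋂ r : Fin n, f^[r] ⁻¹' w r) := by
  have : Countable P := hP.to_subtype
  by_contra! hw
  have hcyl : univ ⊆ ⋃ w : Fin n → P, ⋂ r : Fin n, f^[r] ⁻¹' w r := by
    intro x _
    have hmem (r : Fin n) : ∃ ξ : P, f^[r] x ∈ (ξ : Set X) := by
      obtain ⟨ξ, hξP, hξ⟩ := (hcover ▸ mem_univ (f^[r] x) : f^[r] x ∈ ⋃₀ P)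
      exact ⟨⟨ξ, hξP⟩, hξ⟩
    choose w hw using hmem
    exact mem_iUnion.2 ⟨w, mem_iInter.2 hw⟩
  refine hν (Measure.measure_univ_eq_zero.1 (measure_mono_null hcyl ?_))
  exact measure_iUnion_null fun w => nonpos_iff_eq_zero.1 (hw w)

theorem exists_sameItinerary_measure_pos_of_forall_preimage_ae_eq (hf : Measurable f)
    {n : ℕ} (hn : 0 < n) (h : ∀ C : Set X, MeasurableSet C → f^[n] ⁻¹' C =ᵐ[ν] C)
    {P : Set (Set X)} (hP : P.Countable) (hPm : ∀ ξ ∈ P, MeasurableSet ξ)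
    (hcover : ⋃₀ P = univ) (hν : ν ≠ 0) : ∃ x, 0 < ν (sameItinerary f P x) := by
  have : Countable P := hP.to_subtype
  set G := {y | ∀ (m : ℕ) (ξ : P), f^[m % n] y ∈ (ξ : Set X) → f^[m] y ∈ (ξ : Set X)}
  have hG : ∀ᵐ y ∂ν, y ∈ G := by
    simp only [G, mem_ofPred_eq, ae_all_iff]
    intro m ξ
    filter_upwards [(iterate_preimage_ae_eq_iterate_mod hf h (hPm ξ ξ.2) m).mem_iff]
      with y hy using hy.2
  obtain ⟨w, hw⟩ := exists_cylinder_measure_pos hP hcover hν f n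
  set D := ⋂ r : Fin n, f^[r] ⁻¹' w r
  have hDG : 0 < ν (D ∩ G) := by rwa [measure_inter_conull (t := G) hG]
  obtain ⟨x, hxD, hxG⟩ := nonempty_of_measure_ne_zero hDG.ne'
  have hDG_sub : D ∩ G ⊆ sameItinerary f P x := by
    rintro y ⟨hyD, hyG⟩ m
    let r : Fin n := ⟨m % n, Nat.mod_lt m hn⟩
    exact ⟨w r, (w r).2, hxG m (w r) (mem_iInter.1 hxD r), hyG m (w r) (mem_iInter.1 hyD r)⟩
  exact ⟨x, hDG.trans_le (measure_mono hDG_sub)⟩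

end

theorem measureExpansive_aperiodicStar_general
    [MeasurableSpace X] (μ : Measure X)
    (f : X → X) (hf : Measurable f)
    (hexp : MeasureExpansive μ f) :
    ∀ A : Set X, MeasurableSet A → 0 < μ A → ∀ n : ℕ, 0 < n →
      ∃ B : Set X, MeasurableSet B ∧ B ⊆ A ∧ 0 < μ (B \ f^[n] ⁻¹' B) := by
  intro A hA hApos n hn
  by_contra! hcon
  obtain ⟨P, ⟨hPc, hPm, -, -, hcover⟩, hsens⟩ := hexp
  have hinv (C : Set X) (hC : MeasurableSet C) : f^[n] ⁻¹' C =ᵐ[μ.restrict A] C :=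
    preimage_ae_eq_restrict_of_forall_diff_preimage_null hA
      (fun B hB hBA => nonpos_iff_eq_zero.1 (hcon B hB hBA)) hC
  obtain ⟨x, hx⟩ := exists_sameItinerary_measure_pos_of_forall_preimage_ae_eq hf hn hinv
    hPc hPm hcover (Measure.restrict_eq_zero.not.2 hApos.ne')
  exact hx.ne' (Measure.absolutelyContinuous_of_le Measure.restrict_le_self (hsens x))

/-- Every measure-expansive negative nonsingular map of a probability space is
aperiodic*: every measurable set of positive measure has, for every `n ≥ 1`, a measurable
subset `B` with `μ(B \\ f^{-n}(B)) > 0`. -/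
theorem measureExpansive_aperiodicStar
    [MeasurableSpace X] (μ : Measure X) [IsProbabilityMeasure μ]
    (f : X → X) (hf : Measurable f)
    (hnns : ∀ A : Set X, MeasurableSet A → μ A = 0 → μ (f ⁻¹' A) = 0)
    (hexp : MeasureExpansive μ f) :
    ∀ A : Set X, MeasurableSet A → 0 < μ A → ∀ n : ℕ, 0 < n →
      ∃ B : Set X, MeasurableSet B ∧ B ⊆ A ∧ 0 < μ (B \ f^[n] ⁻¹' B) :=
  measureExpansive_aperiodicStar_general μ f hf hexp
end

section
/- Let f : X → X be a measurable map of a metric probability space (X, d, μ). The following are equivalent: (1) f is pairwise sensitive; (2) there is δ > 0 such that μ(Φ_δ(x)) = 0 for every x ∈ X; (3) there is δ > 0 such that μ(Φ_δ(x)) = 0 for μ-almost every x ∈ X. -/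
/-!
Two points of a dynamical `δ/3`-ball stay `2δ/3`-close forever, so the square `Φ_{δ/3}(x)²`
misses the set of eventually `δ`-separated pairs; if that set has full product measure, the
square is null and hence so is the ball. Conversely, the fibre over `x` of the pairs that are
never `δ`-separated lies in `Φ_δ(x)`, so if almost every such ball is null, Fubini gives the
separated pairs full measure; it is applied to a measurable hull, since that set need not be
measurable.
-/

open MeasureTheory Set Function Filter
open scoped ENNReal

variable {X : Type*}

/-- The dynamical `δ`-ball `Φ_δ(x) = {y : d(fⁿ x, fⁿ y) ≤ δ for all n}`. -/
def dynBall [MetricSpace X] (f : X → X) (δ : ℝ) (x : X) : Set X :=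
  {y | ∀ n : ℕ, dist (f^[n] x) (f^[n] y) ≤ δ}

/-- `f` is pairwise sensitive: for some `δ > 0`, the set of pairs `(x,y)` whose orbits are
`δ`-separated at some time has full product measure. -/
def PairwiseSensitive [MetricSpace X] [MeasurableSpace X] (μ : Measure X)
    (f : X → X) : Prop :=
  ∃ δ : ℝ, 0 < δ ∧
    (μ.prod μ) {p : X × X | ∃ n : ℕ, δ ≤ dist (f^[n] p.1) (f^[n] p.2)} = 1

theorem measure_prod_eq_univ_of_ae_compl_fiber_null {α β : Type*} [MeasurableSpace α]
    [MeasurableSpace β] {μ : Measure α} {ν : Measure β} [SFinite ν] {s : Set (α × β)}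
    (h : ∀ᵐ x ∂μ, ν (Prod.mk x ⁻¹' sᶜ) = 0) : μ.prod ν s = μ.prod ν univ := by
  set t := toMeasurable (μ.prod ν) s
  have hcompl : tᶜ ⊆ sᶜ := compl_subset_compl.mpr (subset_toMeasurable _ _)
  have htc : μ.prod ν tᶜ = 0 := by
    rw [Measure.prod_apply (measurableSet_toMeasurable _ _).compl]
    refine lintegral_eq_zero_of_ae_eq_zero ?_
    filter_upwards [h] with x hx
    exact measure_mono_null (preimage_mono hcompl) hx
  rw [← measure_toMeasurable s, measure_of_measure_compl_eq_zero htc]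

section dynBall

variable [MetricSpace X] {f : X → X}

theorem measurableSet_dynBall [MeasurableSpace X] [OpensMeasurableSpace X] (hf : Measurable f)
    (δ : ℝ) (x : X) : MeasurableSet (dynBall f δ x) := by
  have h : dynBall f δ x = ⋂ n, (fun y => dist (f^[n] x) (f^[n] y)) ⁻¹' Iic δ := by
    ext y
    simp [dynBall]
  rw [h]
  exact MeasurableSet.iInter fun n =>
    ((continuous_const.dist continuous_id).measurable.comp (hf.iterate n)) measurableSet_Iic

theorem dist_iterate_le_of_mem_dynBall {ε : ℝ} {x y z : X} (hy : y ∈ dynBall f ε x)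
    (hz : z ∈ dynBall f ε x) (n : ℕ) : dist (f^[n] y) (f^[n] z) ≤ 2 * ε := by
  have := dist_triangle_left (f^[n] y) (f^[n] z) (f^[n] x)
  linarith [hy n, hz n]

variable [MeasurableSpace X] {μ : Measure X} [IsProbabilityMeasure μ]

theorem PairwiseSensitive.exists_forall_measure_dynBall_eq_zero [OpensMeasurableSpace X]
    (hf : Measurable f) (h : PairwiseSensitive μ f) :
    ∃ δ : ℝ, 0 < δ ∧ ∀ x : X, μ (dynBall f δ x) = 0 := by
  obtain ⟨δ, hδ, hsep⟩ := h
  refine ⟨δ / 3, by positivity, fun x => ?_⟩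
  set A := dynBall f (δ / 3) x
  have hA : MeasurableSet (A ×ˢ A) :=
    (measurableSet_dynBall hf _ x).prod (measurableSet_dynBall hf _ x)
  have hsub : {p : X × X | ∃ n : ℕ, δ ≤ dist (f^[n] p.1) (f^[n] p.2)} ⊆ (A ×ˢ A)ᶜ := by
    rintro ⟨y, z⟩ ⟨n, hn⟩ ⟨hy, hz⟩
    linarith [dist_iterate_le_of_mem_dynBall hy hz n]
  have hAA : μ.prod μ (A ×ˢ A) = 0 :=
    (prob_compl_eq_one_iff hA).mp (le_antisymm prob_le_one (hsep ▸ measure_mono hsub))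
  rwa [Measure.prod_prod, mul_self_eq_zero] at hAA

theorem pairwiseSensitive_of_ae_measure_dynBall_eq_zero {δ : ℝ} (hδ : 0 < δ)
    (h : ∀ᵐ x ∂μ, μ (dynBall f δ x) = 0) : PairwiseSensitive μ f := by
  refine ⟨δ, hδ, ?_⟩
  rw [measure_prod_eq_univ_of_ae_compl_fiber_null, measure_univ]
  filter_upwards [h] with x hx
  refine measure_mono_null (fun y hy => ?_) hx
  simp only [mem_preimage, mem_compl_iff, mem_ofPred_eq, not_exists, not_le] at hy
  exact fun n => (hy n).le

end dynBall

/-- For a Borel measurable map of a metric probability space, the following are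
equivalent: (1) `f` is pairwise sensitive; (2) there is `δ > 0` with `μ(Φ_δ(x)) = 0` for all
`x`; (3) there is `δ > 0` with `μ(Φ_δ(x)) = 0` for `μ`-a.e. `x`. -/
theorem pairwiseSensitive_tfae
    [MetricSpace X] [MeasurableSpace X] [BorelSpace X]
    (μ : Measure X) [IsProbabilityMeasure μ] (f : X → X) (hf : Measurable f) :
    List.TFAE [PairwiseSensitive μ f,
      ∃ δ : ℝ, 0 < δ ∧ ∀ x : X, μ (dynBall f δ x) = 0,
      ∃ δ : ℝ, 0 < δ ∧ ∀ᵐ x ∂μ, μ (dynBall f δ x) = 0] := by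
  tfae_have 1 → 2 := fun h => h.exists_forall_measure_dynBall_eq_zero hf
  tfae_have 2 → 3 := fun ⟨δ, hδ, h⟩ => ⟨δ, hδ, .of_forall h⟩
  tfae_have 3 → 1 := fun ⟨_, hδ, h⟩ => pairwiseSensitive_of_ae_measure_dynBall_eq_zero hδ h
  tfae_finish
end

section
/- Every pairwise sensitive Borel measurable map of a separable metric probability space is measure-expansive. -/
open MeasureTheory Set Function Filter
open scoped ENNReal

variable {X : Type*}

/-!
Cut `X` into countably many measurable pieces of diameter less than the sensitivity constant
`δ`. Two points with the same itinerary then stay `δ`-close along their whole orbits, so the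
square `A × A` of an itinerary class `A` lies in the `μ ⊗ μ`-null set of never-separated pairs,
and `μ A ^ 2 = 0`.
-/

theorem isCountablePartition_image_disjointed [MeasurableSpace X] {B : ℕ → Set X}
    (hB : ∀ n, MeasurableSet (B n)) (hcover : ⋃ n, B n = univ) :
    IsCountablePartition (disjointed B '' {n | (disjointed B n).Nonempty}) := by
  refine ⟨(countable_range _).mono (image_subset_range _ _), ?_, ?_, ?_, ?_⟩
  · rintro _ ⟨n, -, rfl⟩
    exact MeasurableSet.disjointed hB n
  · rintro _ ⟨n, hn, rfl⟩
    exact hn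
  · rintro _ ⟨n, -, rfl⟩ _ ⟨m, -, rfl⟩ hnm
    exact disjoint_disjointed B (ne_of_apply_ne _ hnm)
  · rw [sUnion_image, eq_univ_iff_forall]
    intro x
    have hx : x ∈ ⋃ n, disjointed B n := by simp [iUnion_disjointed, hcover]
    obtain ⟨n, hn⟩ := mem_iUnion.1 hx
    exact mem_biUnion ⟨x, hn⟩ hn

theorem exists_isCountablePartition_dist_lt [PseudoMetricSpace X]
    [TopologicalSpace.SeparableSpace X] [MeasurableSpace X] [OpensMeasurableSpace X]
    {ε : ℝ} (hε : 0 < ε) :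
    ∃ P : Set (Set X), IsCountablePartition P ∧ ∀ ξ ∈ P, ∀ y ∈ ξ, ∀ z ∈ ξ, dist y z < ε := by
  rcases isEmpty_or_nonempty X with _ | _
  · refine ⟨∅, ⟨countable_empty, ?_, ?_, pairwiseDisjoint_empty, ?_⟩, ?_⟩ <;>
      simp [eq_empty_of_isEmpty]
  set c := TopologicalSpace.denseSeq X
  refine ⟨_, isCountablePartition_image_disjointed (B := fun n ↦ Metric.ball (c n) (ε / 2))
    (fun _ ↦ measurableSet_ball) ?_, ?_⟩
  · refine eq_univ_of_forall fun x ↦ mem_iUnion.2 ?_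
    obtain ⟨n, hn⟩ := (TopologicalSpace.denseRange_denseSeq X).exists_dist_lt x (half_pos hε)
    exact ⟨n, Metric.mem_ball.2 hn⟩
  · rintro _ ⟨n, -, rfl⟩ y hy z hz
    calc dist y z ≤ dist y (c n) + dist z (c n) := dist_triangle_right _ _ _
      _ < ε / 2 + ε / 2 :=
        add_lt_add (disjointed_subset _ n hy) (disjointed_subset _ n hz)
      _ = ε := add_halves ε

theorem dist_iterate_lt_of_mem_sameItinerary [PseudoMetricSpace X] {f : X → X}
    {P : Set (Set X)} {δ : ℝ} (hdisj : P.PairwiseDisjoint id)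
    (hsmall : ∀ ξ ∈ P, ∀ y ∈ ξ, ∀ z ∈ ξ, dist y z < δ) {x y z : X}
    (hy : y ∈ sameItinerary f P x) (hz : z ∈ sameItinerary f P x) (n : ℕ) :
    dist (f^[n] y) (f^[n] z) < δ := by
  obtain ⟨ξ, hξ, hxξ, hyξ⟩ := hy n
  obtain ⟨ζ, hζ, hxζ, hzζ⟩ := hz n
  obtain rfl : ξ = ζ := hdisj.elim hξ hζ (not_disjoint_iff.2 ⟨_, hxξ, hxζ⟩)
  exact hsmall ξ hξ _ hyξ _ hzζ

theorem measurableSet_exists_le_dist_iterate [PseudoMetricSpace X]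
    [SecondCountableTopology X] [MeasurableSpace X] [OpensMeasurableSpace X] {f : X → X}
    (hf : Measurable f) (δ : ℝ) :
    MeasurableSet {p : X × X | ∃ n : ℕ, δ ≤ dist (f^[n] p.1) (f^[n] p.2)} := by
  simp only [ofPred_exists]
  exact .iUnion fun n ↦ measurableSet_le measurable_const
    (((hf.iterate n).comp measurable_fst).dist ((hf.iterate n).comp measurable_snd))

/-- Every pairwise sensitive Borel measurable map of a separable metric
probability space is measure-expansive. -/
theorem measureExpansive_of_pairwiseSensitive
    [MetricSpace X] [TopologicalSpace.SeparableSpace X] [MeasurableSpace X] [BorelSpace X]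
    (μ : Measure X) [IsProbabilityMeasure μ] (f : X → X) (hf : Measurable f)
    (hps : PairwiseSensitive μ f) :
    MeasureExpansive μ f := by
  obtain ⟨δ, hδ, hsep⟩ := hps
  have : SecondCountableTopology X := UniformSpace.secondCountable_of_separable X
  have hnull : (μ.prod μ) {p : X × X | ∃ n : ℕ, δ ≤ dist (f^[n] p.1) (f^[n] p.2)}ᶜ = 0 :=
    (prob_compl_eq_zero_iff (measurableSet_exists_le_dist_iterate hf δ)).2 hsep
  obtain ⟨P, hP, hsmall⟩ := exists_isCountablePartition_dist_lt (X := X) hδ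
  refine ⟨P, hP, fun x ↦ ?_⟩
  have hsq : (μ.prod μ) (sameItinerary f P x ×ˢ sameItinerary f P x) = 0 := by
    refine measure_mono_null ?_ hnull
    rintro _ hp ⟨n, hn⟩
    exact hn.not_gt (dist_iterate_lt_of_mem_sameItinerary hP.2.2.2.1 hsmall hp.1 hp.2 n)
  rwa [Measure.prod_prod, mul_self_eq_zero] at hsq
end

section
/- Every expansive Borel measurable map of a nonatomic separable metric probability space is measure-expansive. -/
open MeasureTheory Set Function Filter
open scoped ENNReal

variable {X : Type*}

/-- `f` is expansive: there is `δ > 0` such that distinct points are `δ`-separated at some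
time along their orbits. -/
def ExpansiveMap [MetricSpace X] (f : X → X) : Prop :=
  ∃ δ : ℝ, 0 < δ ∧ ∀ x y : X, (∀ n : ℕ, dist (f^[n] x) (f^[n] y) ≤ δ) → x = y

/-!
Cover the space by countably many balls of radius `δ / 2`, where `δ` is an expansivity constant,
and disjointify. Two points with the same itinerary then stay `δ`-close along their orbits, so by
expansivity each itinerary class is a single point, which is null because `μ` has no atoms.
-/

theorem measure_singleton_eq_zero_of_nonatomic [MeasurableSpace X] [MeasurableSingletonClass X]
    {μ : Measure X} (hna : Nonatomic μ) (x : X) : μ {x} = 0 := by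
  by_contra h
  refine hna {x} ⟨measurableSet_singleton x, pos_iff_ne_zero.mpr h, fun B hB _ => ?_⟩
  rcases subset_singleton_iff_eq.mp hB with rfl | rfl
  · exact Or.inl measure_empty
  · exact Or.inr rfl

theorem isCountablePartition_disjointed [MeasurableSpace X] {B : ℕ → Set X}
    (hB : ∀ i, MeasurableSet (B i)) (hcover : ⋃ i, B i = univ) :
    IsCountablePartition (range (disjointed B) \ {∅}) := by
  refine ⟨(countable_range _).mono sdiff_subset, ?_, ?_, ?_, ?_⟩
  · rintro _ ⟨⟨i, rfl⟩, -⟩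
    exact MeasurableSet.disjointed hB i
  · rintro ξ ⟨-, hξ⟩
    exact nonempty_iff_ne_empty.mpr hξ
  · exact (pairwiseDisjoint_range_iff.mpr fun i j hij =>
      disjoint_disjointed B fun h => hij (h ▸ rfl)).subset sdiff_subset
  · rw [sUnion_sdiff_singleton_empty, sUnion_range, iUnion_disjointed, hcover]

theorem exists_isCountablePartition_dist_le [PseudoMetricSpace X]
    [TopologicalSpace.SeparableSpace X] [MeasurableSpace X] [OpensMeasurableSpace X]
    {ε : ℝ} (hε : 0 < ε) :
    ∃ P : Set (Set X), IsCountablePartition P ∧ ∀ ξ ∈ P, ∀ x ∈ ξ, ∀ y ∈ ξ, dist x y ≤ ε := by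
  rcases isEmpty_or_nonempty X with hX | hX
  · exact ⟨∅, ⟨countable_empty, by simp, by simp, pairwiseDisjoint_empty,
      by simp [univ_eq_empty_iff.mpr hX]⟩, by simp⟩
  obtain ⟨e, he⟩ := TopologicalSpace.exists_dense_seq X
  have hcover : ⋃ i, Metric.ball (e i) (ε / 2) = univ :=
    eq_univ_of_forall fun x => by
      obtain ⟨i, hi⟩ := he.exists_dist_lt x (half_pos hε)
      exact mem_iUnion.mpr ⟨i, Metric.mem_ball.mpr hi⟩
  refine ⟨_, isCountablePartition_disjointed (fun i => measurableSet_ball) hcover, ?_⟩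
  rintro _ ⟨⟨i, rfl⟩, -⟩ x hx y hy
  have hx' := Metric.mem_ball.mp (disjointed_subset _ i hx)
  have hy' := Metric.mem_ball'.mp (disjointed_subset _ i hy)
  linarith [dist_triangle x (e i) y]

theorem sameItinerary_subset_dynBall [MetricSpace X] {P : Set (Set X)} {δ : ℝ}
    (hP : ∀ ξ ∈ P, ∀ x ∈ ξ, ∀ y ∈ ξ, dist x y ≤ δ) (f : X → X) (x : X) :
    sameItinerary f P x ⊆ dynBall f δ x := fun y hy n => by
  obtain ⟨ξ, hξ, hxξ, hyξ⟩ := hy n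
  exact hP ξ hξ _ hxξ _ hyξ

theorem measureExpansive_of_expansive_general
    [MetricSpace X] [TopologicalSpace.SeparableSpace X] [MeasurableSpace X] [BorelSpace X]
    (μ : Measure X) (hna : Nonatomic μ)
    (f : X → X) (hexp : ExpansiveMap f) :
    MeasureExpansive μ f := by
  obtain ⟨δ, hδ, hsep⟩ := hexp
  obtain ⟨P, hP, hdiam⟩ := exists_isCountablePartition_dist_le (X := X) hδ
  have hdyn : ∀ x, dynBall f δ x ⊆ {x} := fun x y hy => (hsep x y hy).symm
  exact ⟨P, hP, fun x => measure_mono_null ((sameItinerary_subset_dynBall hdiam f x).trans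
    (hdyn x)) (measure_singleton_eq_zero_of_nonatomic hna x)⟩

/-- Every expansive Borel measurable map of a nonatomic separable metric
probability space is measure-expansive. -/
theorem measureExpansive_of_expansive
    [MetricSpace X] [TopologicalSpace.SeparableSpace X] [MeasurableSpace X] [BorelSpace X]
    (μ : Measure X) [IsProbabilityMeasure μ] (hna : Nonatomic μ)
    (f : X → X) (hf : Measurable f) (hexp : ExpansiveMap f) :
    MeasureExpansive μ f :=
  measureExpansive_of_expansive_general μ hna f hexp
end
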